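/- (Theorem 1, computational form.) Let n, l1, l2 be an orthonormal family in ℝ³, let a_t, a_H, a_r be unit vectors in ℝ³, and let a_rθ, a_rφ be unit vectors such that {a_r, a_rθ, a_rφ} is orthonormal. Let λ, L1, L2, H0, η, d_r be positive reals and set k = 2π/λ. Define the complex numbers E_θ = −(i·k·η/(4π·d_r))·exp(−i·k·d_r) · ∫_{β=-L2/2}^{L2/2} ∫_{α=-L1/2}^{L1/2} ⟨2·H0·(n × a_H), a_rθ⟩ · exp(−i·k·⟨a_t, α·l1+β·l2⟩) · exp(i·k·⟨α·l1+β·l2, a_r⟩) dα dβ and E_φ defined identically with a_rθ replaced by a_rφ. Then 4π·d_r²·(|E_θ|² + |E_φ|²)/(η²·H0²) = (4π·L1²·L2²/λ²) · ‖(n × a_H) × a_r‖² · sinc²((k·L1/2)·⟨a_r − a_t, l1⟩) · sinc²((k·L2/2)·⟨a_r − a_t, l2⟩). -/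

import Mathlib

/-!
The phase of the physical-optics integrand is linear in the plate coordinates `(α, β)`, so the
double integral factors into two one-dimensional integrals `∫ exp (i c x) dx = L sinc (c L / 2)`
over `[-L/2, L/2]`. The far-field prefactor has modulus `k η / (4 π d_r)`. Since
`{a_r, a_rθ, a_rφ}` is an orthonormal basis, the squared components of `w = n × a_H` along
`a_rθ` and `a_rφ` add up to `‖w‖² - ⟪w, a_r⟫²`, which is `‖w × a_r‖²` by Lagrange's identity.
-/

open scoped RealInnerProductSpace

noncomputable def sinc (x : ℝ) : ℝ := if x = 0 then 1 else Real.sin x / x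

noncomputable def vec3 (x y z : ℝ) : EuclideanSpace ℝ (Fin 3) := WithLp.toLp 2 ![x, y, z]

noncomputable def cross3 (v w : EuclideanSpace ℝ (Fin 3)) : EuclideanSpace ℝ (Fin 3) :=
  vec3 (v 1 * w 2 - v 2 * w 1) (v 2 * w 0 - v 0 * w 2) (v 0 * w 1 - v 1 * w 0)

open Complex in
theorem integral_cexp_mul_I_eq_mul_sinc (c L : ℝ) :
    ∫ x in (-(L / 2))..(L / 2), exp (I * ((c * x : ℝ) : ℂ)) = ((L * sinc (c * L / 2) : ℝ) : ℂ) := by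
  rcases eq_or_ne c 0 with rfl | hc
  · simp [sinc]
  have hcC : (c : ℂ) ≠ 0 := ofReal_ne_zero.mpr hc
  have hIc : I * c ≠ 0 := mul_ne_zero I_ne_zero hcC
  have hmul_sinc : L * sinc (c * L / 2) = 2 * Real.sin (c * L / 2) / c := by
    unfold sinc
    split_ifs with h
    · obtain rfl : L = 0 := by simpa [hc] using h
      simp
    · have hL : L ≠ 0 := by rintro rfl; simp at h
      field_simp
  have hright : exp (I * c * (L / 2)) = cos (c * L / 2) + sin (c * L / 2) * I := by
    rw [← exp_mul_I]; ring_nf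
  have hleft : exp (I * c * -(L / 2)) = cos (c * L / 2) - sin (c * L / 2) * I := by
    rw [show I * c * -(L / 2) = -(c * L / 2) * I by ring, exp_mul_I, cos_neg, sin_neg]; ring
  rw [hmul_sinc]
  simp_rw [ofReal_mul, ← mul_assoc]
  rw [integral_exp_mul_complex hIc, div_eq_iff hIc]
  push_cast
  rw [hright, hleft]
  field_simp
  ring

open Matrix in
theorem norm_cross3_sq (v w : EuclideanSpace ℝ (Fin 3)) :
    ‖cross3 v w‖ ^ 2 = ‖v‖ ^ 2 * ‖w‖ ^ 2 - ⟪v, w⟫ ^ 2 := by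
  have hcross : cross3 v w = WithLp.toLp 2 (v.ofLp ⨯₃ w.ofLp) := by
    ext i; fin_cases i <;> simp [cross3, vec3, cross_apply]
  simp only [← real_inner_self_eq_norm_sq, EuclideanSpace.inner_eq_star_dotProduct, hcross,
    star_trivial]
  rw [cross_dot_cross, dotProduct_comm v.ofLp w.ofLp]
  ring

theorem Orthonormal.sum_inner_sq_eq_norm_sq {ι E : Type*} [Fintype ι] [Nonempty ι]
    [NormedAddCommGroup E] [InnerProductSpace ℝ E] {v : ι → E} (hv : Orthonormal ℝ v)
    (hcard : Fintype.card ι = Module.finrank ℝ E) (x : E) :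
    ∑ i, ⟪x, v i⟫ ^ 2 = ‖x‖ ^ 2 := by
  have hspan := (hv.linearIndependent.span_eq_top_of_card_eq_finrank hcard).ge
  simpa using (OrthonormalBasis.mk hv hspan).sum_sq_inner_left x

theorem inner_sq_add_inner_sq_eq_norm_cross3_sq (w r θ φ : EuclideanSpace ℝ (Fin 3))
    (h : Orthonormal ℝ ![r, θ, φ]) :
    ⟪w, θ⟫ ^ 2 + ⟪w, φ⟫ ^ 2 = ‖cross3 w r‖ ^ 2 := by
  have hparseval := h.sum_inner_sq_eq_norm_sq (by simp) w
  have hr : ‖r‖ = 1 := by simpa using h.1 0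
  simp only [Fin.sum_univ_three, Matrix.cons_val_zero, Matrix.cons_val_one,
    Matrix.cons_val_two, Matrix.head_cons, Matrix.tail_cons] at hparseval
  rw [norm_cross3_sq, hr]
  linarith

open Complex in
theorem norm_sq_far_field (k η d X : ℝ) :
    ‖-(I * k * η / (4 * Real.pi * d)) * exp (-(I * k * d)) * (X : ℂ)‖ ^ 2 =
      (k * η / (4 * Real.pi * d)) ^ 2 * X ^ 2 := by
  simp [norm_exp, mul_pow, div_pow, abs_of_pos Real.pi_pos]

section

variable {E : Type*} [NormedAddCommGroup E] [InnerProductSpace ℝ E]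

open Complex

theorem cexp_neg_inner_mul_cexp_inner (k : ℝ) (t r p : E) :
    exp (-(I * ((k * ⟪t, p⟫ : ℝ) : ℂ))) * exp (I * ((k * ⟪p, r⟫ : ℝ) : ℂ)) =
      exp (I * ((k * ⟪r - t, p⟫ : ℝ) : ℂ)) := by
  rw [← exp_add, inner_sub_left, real_inner_comm r p]
  push_cast
  ring_nf

theorem integral_integral_plate_eq_mul_sinc (C k L1 L2 : ℝ) (t r l1 l2 : E) :
    ∫ β in (-(L2 / 2))..(L2 / 2), ∫ α in (-(L1 / 2))..(L1 / 2),
        (C : ℂ) * exp (-(I * ((k * ⟪t, α • l1 + β • l2⟫ : ℝ) : ℂ))) *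
          exp (I * ((k * ⟪α • l1 + β • l2, r⟫ : ℝ) : ℂ)) =
      ((C * (L1 * sinc (k * L1 / 2 * ⟪r - t, l1⟫)) *
        (L2 * sinc (k * L2 / 2 * ⟪r - t, l2⟫)) : ℝ) : ℂ) := by
  have hsplit : ∀ α β : ℝ,
      (C : ℂ) * exp (-(I * ((k * ⟪t, α • l1 + β • l2⟫ : ℝ) : ℂ))) *
          exp (I * ((k * ⟪α • l1 + β • l2, r⟫ : ℝ) : ℂ)) =
        (C * exp (I * ((k * ⟪r - t, l2⟫ * β : ℝ) : ℂ))) *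
          exp (I * ((k * ⟪r - t, l1⟫ * α : ℝ) : ℂ)) := by
    intro α β
    rw [mul_assoc, cexp_neg_inner_mul_cexp_inner, mul_assoc, ← exp_add, inner_add_right,
      real_inner_smul_right, real_inner_smul_right]
    push_cast
    ring_nf
  simp_rw [hsplit, intervalIntegral.integral_const_mul, integral_cexp_mul_I_eq_mul_sinc,
    intervalIntegral.integral_mul_const, intervalIntegral.integral_const_mul,
    integral_cexp_mul_I_eq_mul_sinc]
  push_cast
  ring_nf

end

theorem rcs_of_rectangular_plate_general
    (n l1 l2 a_t a_H a_r a_rθ a_rφ : EuclideanSpace ℝ (Fin 3))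
    (h_obs : Orthonormal ℝ ![a_r, a_rθ, a_rφ])
    (lam L1 L2 H0 η d_r k : ℝ)
    (hH0 : 0 < H0)
    (hη : 0 < η) (hdr : 0 < d_r) (hk : k = 2 * Real.pi / lam)
    (E_θ E_φ : ℂ)
    (hEθ : E_θ = -(Complex.I * k * η / (4 * Real.pi * d_r)) *
        Complex.exp (-(Complex.I * k * d_r)) *
        ∫ β in (-(L2 / 2))..(L2 / 2), ∫ α in (-(L1 / 2))..(L1 / 2),
          ((⟪(2 * H0) • cross3 n a_H, a_rθ⟫ : ℝ) : ℂ) *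
            Complex.exp (-(Complex.I * ((k * ⟪a_t, α • l1 + β • l2⟫ : ℝ) : ℂ))) *
            Complex.exp (Complex.I * ((k * ⟪α • l1 + β • l2, a_r⟫ : ℝ) : ℂ)))
    (hEφ : E_φ = -(Complex.I * k * η / (4 * Real.pi * d_r)) *
        Complex.exp (-(Complex.I * k * d_r)) *
        ∫ β in (-(L2 / 2))..(L2 / 2), ∫ α in (-(L1 / 2))..(L1 / 2),
          ((⟪(2 * H0) • cross3 n a_H, a_rφ⟫ : ℝ) : ℂ) *
            Complex.exp (-(Complex.I * ((k * ⟪a_t, α • l1 + β • l2⟫ : ℝ) : ℂ))) *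
            Complex.exp (Complex.I * ((k * ⟪α • l1 + β • l2, a_r⟫ : ℝ) : ℂ))) :
    4 * Real.pi * d_r ^ 2 * (‖E_θ‖ ^ 2 + ‖E_φ‖ ^ 2) / (η ^ 2 * H0 ^ 2)
      = 4 * Real.pi * L1 ^ 2 * L2 ^ 2 / lam ^ 2 * ‖cross3 (cross3 n a_H) a_r‖ ^ 2 *
        sinc (k * L1 / 2 * ⟪a_r - a_t, l1⟫) ^ 2 *
        sinc (k * L2 / 2 * ⟪a_r - a_t, l2⟫) ^ 2 := by
  rw [integral_integral_plate_eq_mul_sinc] at hEθ hEφ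
  rw [hEθ, hEφ, norm_sq_far_field, norm_sq_far_field, real_inner_smul_left, real_inner_smul_left,
    ← inner_sq_add_inner_sq_eq_norm_cross3_sq _ _ _ _ h_obs, hk]
  field_simp
  ring

/-- Theorem 1 (computational form): the radar cross section
`σ = 4π d_r² (|E_θ|² + |E_φ|²)/(η² H0²)` of a rectangular metal plate computed by
physical optics equals
`(4π L1² L2²/λ²) ‖(n × a_H) × a_r‖² sinc²((kL1/2)⟨a_r−a_t,l1⟩) sinc²((kL2/2)⟨a_r−a_t,l2⟩)`. -/
theorem rcs_of_rectangular_plate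
    (n l1 l2 a_t a_H a_r a_rθ a_rφ : EuclideanSpace ℝ (Fin 3))
    (h_plate : Orthonormal ℝ ![n, l1, l2])
    (h_at : ‖a_t‖ = 1) (h_aH : ‖a_H‖ = 1)
    (h_obs : Orthonormal ℝ ![a_r, a_rθ, a_rφ])
    (lam L1 L2 H0 η d_r k : ℝ)
    (hlam : 0 < lam) (hL1 : 0 < L1) (hL2 : 0 < L2) (hH0 : 0 < H0)
    (hη : 0 < η) (hdr : 0 < d_r) (hk : k = 2 * Real.pi / lam)
    (E_θ E_φ : ℂ)
    (hEθ : E_θ = -(Complex.I * k * η / (4 * Real.pi * d_r)) *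
        Complex.exp (-(Complex.I * k * d_r)) *
        ∫ β in (-(L2 / 2))..(L2 / 2), ∫ α in (-(L1 / 2))..(L1 / 2),
          ((⟪(2 * H0) • cross3 n a_H, a_rθ⟫ : ℝ) : ℂ) *
            Complex.exp (-(Complex.I * ((k * ⟪a_t, α • l1 + β • l2⟫ : ℝ) : ℂ))) *
            Complex.exp (Complex.I * ((k * ⟪α • l1 + β • l2, a_r⟫ : ℝ) : ℂ)))
    (hEφ : E_φ = -(Complex.I * k * η / (4 * Real.pi * d_r)) *
        Complex.exp (-(Complex.I * k * d_r)) *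
        ∫ β in (-(L2 / 2))..(L2 / 2), ∫ α in (-(L1 / 2))..(L1 / 2),
          ((⟪(2 * H0) • cross3 n a_H, a_rφ⟫ : ℝ) : ℂ) *
            Complex.exp (-(Complex.I * ((k * ⟪a_t, α • l1 + β • l2⟫ : ℝ) : ℂ))) *
            Complex.exp (Complex.I * ((k * ⟪α • l1 + β • l2, a_r⟫ : ℝ) : ℂ))) :
    4 * Real.pi * d_r ^ 2 * (‖E_θ‖ ^ 2 + ‖E_φ‖ ^ 2) / (η ^ 2 * H0 ^ 2)
      = 4 * Real.pi * L1 ^ 2 * L2 ^ 2 / lam ^ 2 * ‖cross3 (cross3 n a_H) a_r‖ ^ 2 *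
        sinc (k * L1 / 2 * ⟪a_r - a_t, l1⟫) ^ 2 *
        sinc (k * L2 / 2 * ⟪a_r - a_t, l2⟫) ^ 2 :=
  rcs_of_rectangular_plate_general n l1 l2 a_t a_H a_r a_rθ a_rφ h_obs lam L1 L2 H0 η d_r k hH0 hη
    hdr hk E_θ E_φ hEθ hEφ
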